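/- arXiv:1306.3176 — 3 statements merged into one kernel-verified Lean document; each statement's English description precedes it below -/
import Mathlib

section
/- Let V, W be finite-dimensional representations of a reductive group G, x a point of the standard apartment, and equip V⊗F, W⊗F, and Hom(V,W)⊗F ≅ Hom_F(V⊗F, W⊗F) with their Moy-Prasad filtrations. Then Hom(V,W)̂_{x,r} = { f : f(V̂_{x,s}) ⊆ Ŵ_{x,s+r} for all s ∈ ℝ }. -/
/-! A weight vector `φ ∈ Hom(V,W)_μ` maps `V_χ` into `W_{χ+μ}`, and `⟨χ + μ, x⟩ = ⟨χ, x⟩ + ⟨μ, x⟩`;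
this gives the inclusion of `Hom(V,W)̂_{x,r}` in the right-hand side. Conversely, if `v ∈ V_χ` then
`v z⁰ ∈ V̂_{x,⟨χ,x⟩}`, so the hypothesis says that every coefficient `Φ_m` maps `V_χ` into the sum
of the `W_ν` with `⟨ν - χ, x⟩ + m ≥ r`. Splitting `Φ_m = ∑ π^W_ν ∘ Φ_m ∘ π^V_χ` along the finitely
many nonzero weight spaces, the block `(χ, ν)` lies in `Hom(V,W)_{ν-χ}` and vanishes unless
`⟨ν - χ, x⟩ + m ≥ r`. -/

open HahnSeries

variable {k V W : Type*} [Field k] [Algebra ℝ k]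
  [AddCommGroup V] [Module k V] [AddCommGroup W] [Module k W]

/-- The convolution action of `Hom(V,W) ⊗ F ≅ Hom_F(V ⊗ F, W ⊗ F)` on `V ⊗ F`,
where `U ⊗ F` is modelled by Laurent series with coefficients in `U`. -/
noncomputable def homApply (Φ : HahnSeries ℤ (V →ₗ[k] W)) (f : HahnSeries ℤ V) :
    HahnSeries ℤ W :=
  { coeff := fun a =>
      ∑ ij ∈ Finset.addAntidiagonal Φ.isPWO_support f.isPWO_support a,
        Φ.coeff ij.1 (f.coeff ij.2)
    isPWO_support' := Finset.isPWO_support_addAntidiagonal.mono (fun a ha => by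
      simp only [Function.mem_support, ne_eq] at ha
      rw [Set.mem_setOf_eq]
      by_contra h
      rw [Finset.not_nonempty_iff_eq_empty] at h
      exact ha (by rw [show Finset.addAntidiagonal Φ.isPWO_support f.isPWO_support a = ∅ from h, Finset.sum_empty])) }

/-- The Moy–Prasad filtration step `Û_{x,r}` on `U ⊗ F`, for a weight decomposition
`Uwt` of `U` and a point `x` of the standard apartment: the coefficient of `z^m`
must lie in the sum of the weight spaces `U_χ` with `⟨χ,x⟩ + m ≥ r`. -/
def mpFilt {U : Type*} [AddCommGroup U] [Module k U] {d : ℕ}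
    (Uwt : (Fin d → ℤ) → Submodule k U) (x : Fin d → ℝ) (r : ℝ) :
    Set (HahnSeries ℤ U) :=
  {f | ∀ m : ℤ, f.coeff m ∈ ⨆ χ ∈ {χ : Fin d → ℤ | r ≤ (∑ i, (χ i : ℝ) * x i) + m}, Uwt χ}

/-- The weight decomposition of `Hom(V, W)` induced by weight decompositions of `V`
and `W` (the `μ`-weight space consists of those `φ` with `φ(V_χ) ⊆ W_{χ+μ}` for all `χ`). -/
def homWt {d : ℕ} (Vwt : (Fin d → ℤ) → Submodule k V) (Wwt : (Fin d → ℤ) → Submodule k W)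
    (μ : Fin d → ℤ) : Submodule k (V →ₗ[k] W) :=
  { carrier := {φ | ∀ χ : Fin d → ℤ, ∀ v ∈ Vwt χ, φ v ∈ Wwt (χ + μ)}
    add_mem' := fun hφ hψ χ v hv => (Wwt _).add_mem (hφ χ v hv) (hψ χ v hv)
    zero_mem' := fun χ v _ => (Wwt _).zero_mem
    smul_mem' := fun c φ hφ χ v hv => (Wwt _).smul_mem c (hφ χ v hv) }

namespace DirectSum.IsInternal

variable {R ι M : Type*} [Ring R] [DecidableEq ι] [AddCommGroup M] [Module R M]
  {A : ι → Submodule R M}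

noncomputable def proj (h : IsInternal A) (i : ι) : M →ₗ[R] M :=
  (A i).subtype ∘ₗ component R ι (fun i => A i) i ∘ₗ
    (LinearEquiv.ofBijective (coeLinearMap A) h).symm.toLinearMap

variable (h : IsInternal A)

theorem proj_apply (i : ι) (u : M) :
    h.proj i u = (LinearEquiv.ofBijective (coeLinearMap A) h).symm u i :=
  rfl

theorem proj_mem (i : ι) (u : M) : h.proj i u ∈ A i :=
  ((LinearEquiv.ofBijective (coeLinearMap A) h).symm u i).2

theorem proj_of_mem_same {i : ι} {u : M} (hu : u ∈ A i) : h.proj i u = u := by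
  rw [proj_apply, h.ofBijective_coeLinearMap_of_mem hu]

theorem proj_of_mem_ne {i j : ι} {u : M} (hu : u ∈ A j) (hij : j ≠ i) : h.proj i u = 0 := by
  rw [proj_apply, h.ofBijective_coeLinearMap_of_mem_ne hij hu, Submodule.coe_zero]

theorem proj_of_mem_iSup_of_notMem {S : Set ι} {i : ι} {u : M} (hu : u ∈ ⨆ j ∈ S, A j)
    (hi : i ∉ S) : h.proj i u = 0 := by
  have hker : (⨆ j ∈ S, A j) ≤ LinearMap.ker (h.proj i) :=
    iSup₂_le fun j hj u hu => h.proj_of_mem_ne hu (ne_of_mem_of_not_mem hj hi)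
  exact hker hu

theorem sum_proj_eq_id {F : Finset ι} (hF : ∀ i ∉ F, A i = ⊥) :
    ∑ i ∈ F, h.proj i = LinearMap.id := by
  ext u
  have hu : u ∈ iSup A := h.submodule_iSup_eq_top ▸ Submodule.mem_top
  induction hu using Submodule.iSup_induction' with
  | mem j u hu =>
    rw [LinearMap.sum_apply]
    by_cases hj : j ∈ F
    · rw [Finset.sum_eq_single_of_mem j hj fun i _ hij => h.proj_of_mem_ne hu hij.symm,
        h.proj_of_mem_same hu, LinearMap.id_apply]
    · have hu0 : u = 0 := (Submodule.mem_bot R).mp (hF j hj ▸ hu)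
      simp [hu0]
  | zero => simp
  | add u v _ _ hu hv => simp_all [map_add]

end DirectSum.IsInternal

section Weights

variable {k V W : Type*} [Field k] [AddCommGroup V] [Module k V] [AddCommGroup W] [Module k W]
  {d : ℕ} {Vwt : (Fin d → ℤ) → Submodule k V} {Wwt : (Fin d → ℤ) → Submodule k W}

theorem sum_intCast_add_mul (χ μ : Fin d → ℤ) (x : Fin d → ℝ) :
    ∑ i, (((χ + μ) i : ℤ) : ℝ) * x i = ∑ i, (χ i : ℝ) * x i + ∑ i, (μ i : ℝ) * x i := by
  simp [add_mul, Finset.sum_add_distrib]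

theorem apply_mem_iSup_of_mem_iSup_homWt {A B T : Set (Fin d → ℤ)}
    (hT : ∀ μ ∈ A, ∀ χ ∈ B, χ + μ ∈ T) {φ : V →ₗ[k] W} (hφ : φ ∈ ⨆ μ ∈ A, homWt Vwt Wwt μ)
    {v : V} (hv : v ∈ ⨆ χ ∈ B, Vwt χ) : φ v ∈ ⨆ ν ∈ T, Wwt ν := by
  rw [iSup_subtype'] at hφ hv
  induction hφ using Submodule.iSup_induction' with
  | mem μ φ hφ =>
    induction hv using Submodule.iSup_induction' with
    | mem χ v hv =>
      exact le_iSup₂ (f := fun ν _ => Wwt ν) (χ.1 + μ.1) (hT μ.1 μ.2 χ.1 χ.2) (hφ χ.1 v hv)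
    | zero => simp
    | add v v' _ _ hv hv' => simpa using add_mem hv hv'
  | zero => simp
  | add φ ψ _ _ hφ hψ => simpa using add_mem hφ hψ

theorem proj_comp_comp_proj_mem_homWt (hV : DirectSum.IsInternal Vwt)
    (hW : DirectSum.IsInternal Wwt) (φ : V →ₗ[k] W) (χ ν : Fin d → ℤ) :
    hW.proj ν ∘ₗ φ ∘ₗ hV.proj χ ∈ homWt Vwt Wwt (ν - χ) := by
  intro χ' v hv
  by_cases hχ : χ' = χ
  · subst hχ
    simpa [hV.proj_of_mem_same hv] using hW.proj_mem ν (φ v)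
  · simp [hV.proj_of_mem_ne hv hχ]

theorem mem_iSup_homWt_iff (hV : DirectSum.IsInternal Vwt) (hW : DirectSum.IsInternal Wwt)
    [Module.Finite k V] [Module.Finite k W] {A : Set (Fin d → ℤ)} {φ : V →ₗ[k] W} :
    φ ∈ ⨆ μ ∈ A, homWt Vwt Wwt μ ↔
      ∀ χ, ∀ v ∈ Vwt χ, φ v ∈ ⨆ ν ∈ {ν | ν - χ ∈ A}, Wwt ν := by
  refine ⟨fun hφ χ v hv => apply_mem_iSup_of_mem_iSup_homWt ?_ hφ
    (le_iSup₂ (f := fun χ' (_ : χ' ∈ ({χ} : Set _)) => Vwt χ') χ rfl hv), fun hφ => ?_⟩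
  · rintro μ hμ _ rfl
    simpa using hμ
  obtain ⟨FV, hFV⟩ : ∃ F : Finset (Fin d → ℤ), ∀ χ ∉ F, Vwt χ = ⊥ :=
    ⟨(Submodule.finite_ne_bot_of_iSupIndep hV.submodule_iSupIndep).toFinset, by simp⟩
  obtain ⟨FW, hFW⟩ : ∃ F : Finset (Fin d → ℤ), ∀ ν ∉ F, Wwt ν = ⊥ :=
    ⟨(Submodule.finite_ne_bot_of_iSupIndep hW.submodule_iSupIndep).toFinset, by simp⟩
  have hdecomp : φ = ∑ χ ∈ FV, ∑ ν ∈ FW, hW.proj ν ∘ₗ φ ∘ₗ hV.proj χ := by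
    ext v
    calc φ v = (∑ ν ∈ FW, hW.proj ν) (φ ((∑ χ ∈ FV, hV.proj χ) v)) := by
          rw [hV.sum_proj_eq_id hFV, hW.sum_proj_eq_id hFW, LinearMap.id_apply, LinearMap.id_apply]
      _ = _ := by simp only [LinearMap.sum_apply, map_sum, LinearMap.comp_apply]
  rw [hdecomp]
  refine Submodule.sum_mem _ fun χ _ => Submodule.sum_mem _ fun ν _ => ?_
  by_cases hν : ν - χ ∈ A
  · exact le_iSup₂ (f := fun μ (_ : μ ∈ A) => homWt Vwt Wwt μ) (ν - χ) hν
      (proj_comp_comp_proj_mem_homWt hV hW φ χ ν)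
  · have hzero : hW.proj ν ∘ₗ φ ∘ₗ hV.proj χ = 0 := LinearMap.ext fun v =>
      hW.proj_of_mem_iSup_of_notMem (hφ χ _ (hV.proj_mem χ v)) hν
    rw [hzero]
    exact zero_mem _

theorem single_zero_mem_mpFilt {χ : Fin d → ℤ} {v : V} (hv : v ∈ Vwt χ) (x : Fin d → ℝ) :
    single 0 v ∈ mpFilt Vwt x (∑ i, (χ i : ℝ) * x i) := by
  intro m
  by_cases hm : m = 0
  · subst hm
    rw [coeff_single_same]
    exact le_iSup₂ (f := fun χ' _ => Vwt χ') χ (by simp) hv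
  · rw [coeff_single_of_ne hm]
    exact zero_mem _

theorem homApply_coeff (Φ : HahnSeries ℤ (V →ₗ[k] W)) (f : HahnSeries ℤ V) (a : ℤ) :
    (homApply Φ f).coeff a =
      ∑ ij ∈ Finset.antidiagonal Φ.isPWO_support f.isPWO_support a, Φ.coeff ij.1 (f.coeff ij.2) :=
  rfl

theorem homApply_single_zero_coeff (Φ : HahnSeries ℤ (V →ₗ[k] W)) (v : V) (a : ℤ) :
    (homApply Φ (single 0 v)).coeff a = Φ.coeff a v := by
  have hsub : Finset.antidiagonal Φ.isPWO_support (single (0 : ℤ) v).isPWO_support a ⊆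
      {(a, 0)} := by
    rintro ⟨i, j⟩ hij
    obtain ⟨-, hj, hija⟩ := Finset.mem_antidiagonal.mp hij
    obtain rfl : j = 0 := support_single_subset hj
    simp [← hija]
  rw [homApply_coeff, Finset.sum_subset hsub, Finset.sum_singleton, coeff_single_same]
  intro ij hij hnot
  obtain rfl := Finset.mem_singleton.mp hij
  by_cases ha : Φ.coeff a = 0
  · simp [ha]
  · by_cases hv : v = 0
    · simp [hv]
    · exact absurd (Finset.mem_antidiagonal.mpr ⟨ha, by simpa using hv, add_zero a⟩) hnot

end Weights

/-- Let `V, W` be finite-dimensional representations of a reductive group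
`G`, `x` a point of the standard apartment, and equip `V⊗F`, `W⊗F` and
`Hom(V,W)⊗F ≅ Hom_F(V⊗F, W⊗F)` with their Moy–Prasad filtrations.  Then
`Hom(V,W)̂_{x,r} = { f : f(V̂_{x,s}) ⊆ Ŵ_{x,s+r} for all s ∈ ℝ }`. -/
theorem stmt4 {d : ℕ}
    (Vwt : (Fin d → ℤ) → Submodule k V) (Wwt : (Fin d → ℤ) → Submodule k W)
    (hV : DirectSum.IsInternal Vwt) (hW : DirectSum.IsInternal Wwt)
    [Module.Finite k V] [Module.Finite k W]
    (x : Fin d → ℝ) (r : ℝ) (Φ : HahnSeries ℤ (V →ₗ[k] W)) :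
    Φ ∈ mpFilt (homWt Vwt Wwt) x r
    ↔ ∀ s : ℝ, ∀ f ∈ mpFilt Vwt x s, homApply Φ f ∈ mpFilt Wwt x (s + r) := by
  refine ⟨fun hΦ s f hf a => ?_, fun H m => ?_⟩
  · rw [homApply_coeff]
    refine Submodule.sum_mem _ fun ij hij => apply_mem_iSup_of_mem_iSup_homWt ?_ (hΦ ij.1) (hf ij.2)
    have hija : ((ij.1 + ij.2 : ℤ) : ℝ) = a := congrArg _ (Finset.mem_antidiagonal.mp hij).2.2
    intro μ hμ χ hχ
    simp only [Set.mem_ofPred_eq, sum_intCast_add_mul] at hμ hχ ⊢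
    push_cast at hija
    linarith
  · rw [mem_iSup_homWt_iff hV hW]
    intro χ v hv
    have hm := H _ _ (single_zero_mem_mpFilt hv x) m
    rw [homApply_single_zero_coeff] at hm
    refine (biSup_mono (f := Wwt) fun ν hν => ?_) hm
    have hpair := sum_intCast_add_mul χ (ν - χ) x
    rw [add_sub_cancel] at hpair
    simp only [Set.mem_ofPred_eq] at hν ⊢
    linarith
end

section
/- Let F = k((z)), let E = k((u)) with u^e = z be a degree-e extension, and write τ_E = u·d/du, so τ_E = e·τ on F. Let G be reductive with maximal torus T, V a representation, x in the standard apartment of G over F, and let ex denote the point with (ex)~ = e·x̃ in the apartment over E. Then for all r ∈ ℝ, the F-graded piece V̂_x(r) equals (V ⊗ E)_{ex}(er) ∩ (V ⊗ F), and V̂_{x,r} = (V ⊗ E)_{ex,er} ∩ (V ⊗ F). -/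
open HahnSeries

variable {k V : Type*} [Field k] [Algebra ℝ k] [AddCommGroup V] [Module k V]

/-- The inclusion `V ⊗ F ⊆ V ⊗ E` for the degree-`e` extension `E = k((u))`,
`u^e = z`, of `F = k((z))`: a series in `z` becomes a series in `u` via `z = u^e`,
i.e. the coefficient of `z^m` becomes the coefficient of `u^{em}`. -/
noncomputable def stretch (e : ℕ) (he : 0 < e) (f : HahnSeries ℤ V) : HahnSeries ℤ V :=
  HahnSeries.embDomain
    (OrderEmbedding.ofStrictMono (fun m : ℤ => (e : ℤ) * m)
      (fun a b h => mul_lt_mul_of_pos_left h (by exact_mod_cast he))) f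

/-! A series in `u` lies in `V ⊗ F` exactly when its coefficients are supported on
`eℤ`, and `z^m = u^{em}`. So a condition on the `u^n`-coefficients of `stretch f`, read at
`n = em`, is the same condition on the `z^m`-coefficients of `f`; and since `τ_E = e·τ`, every
eigenvalue (and every lower bound on eigenvalues) over `E` is `e` times the one over `F`. -/

theorem coeff_stretch_mul (e : ℕ) (he : 0 < e) (f : HahnSeries ℤ V) (m : ℤ) :
    (stretch e he f).coeff ((e : ℤ) * m) = f.coeff m :=
  embDomain_coeff

theorem coeff_stretch_of_not_dvd (e : ℕ) (he : 0 < e) (f : HahnSeries ℤ V) {n : ℤ}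
    (hn : ¬ (e : ℤ) ∣ n) : (stretch e he f).coeff n = 0 :=
  embDomain_of_notMem_range fun ⟨m, hm⟩ => hn ⟨m, hm.symm⟩

theorem range_stretch_inter_setOf_coeff_mem {σ : Type*} [SetLike σ V] [ZeroMemClass σ V]
    (e : ℕ) (he : 0 < e) (S : ℤ → σ) :
    Set.range (stretch e he) ∩ {g | ∀ n, g.coeff n ∈ S n}
      = stretch e he '' {f | ∀ m, f.coeff m ∈ S ((e : ℤ) * m)} := by
  ext g
  constructor
  · rintro ⟨⟨f, rfl⟩, hg⟩
    exact ⟨f, fun m => coeff_stretch_mul e he f m ▸ hg _, rfl⟩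
  · rintro ⟨f, hf, rfl⟩
    refine ⟨⟨f, rfl⟩, fun n => ?_⟩
    by_cases hn : (e : ℤ) ∣ n
    · obtain ⟨m, rfl⟩ := hn
      exact (coeff_stretch_mul e he f m).symm ▸ hf m
    · exact (coeff_stretch_of_not_dvd e he f hn).symm ▸ zero_mem _

theorem stmt15_general {d : ℕ}
    (Vwt : (Fin d → ℤ) → Submodule k V)
    (x : Fin d → ℝ) (e : ℕ) (he : 0 < e) (r : ℝ) :
    -- graded pieces
    (Set.range (stretch (V := V) e he)
        ∩ {gE : HahnSeries ℤ V | ∀ n : ℤ,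
            gE.coeff n ∈ ⨆ χ ∈ {χ : Fin d → ℤ |
              (e : ℝ) * (∑ i, (χ i : ℝ) * x i) + n = (e : ℝ) * r}, Vwt χ}
      = stretch (V := V) e he ''
          {f : HahnSeries ℤ V | ∀ m : ℤ,
            f.coeff m ∈ ⨆ χ ∈ {χ : Fin d → ℤ |
              (∑ i, (χ i : ℝ) * x i) + m = r}, Vwt χ})
    ∧
    -- filtration steps
    (Set.range (stretch (V := V) e he)
        ∩ {gE : HahnSeries ℤ V | ∀ n : ℤ,
            gE.coeff n ∈ ⨆ χ ∈ {χ : Fin d → ℤ |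
              (e : ℝ) * r ≤ (e : ℝ) * (∑ i, (χ i : ℝ) * x i) + n}, Vwt χ}
      = stretch (V := V) e he ''
          {f : HahnSeries ℤ V | ∀ m : ℤ,
            f.coeff m ∈ ⨆ χ ∈ {χ : Fin d → ℤ |
              r ≤ (∑ i, (χ i : ℝ) * x i) + m}, Vwt χ}) := by
  have he' : (0 : ℝ) < e := by exact_mod_cast he
  constructor <;>
    refine (range_stretch_inter_setOf_coeff_mem e he
      (fun n => ⨆ χ ∈ {χ : Fin d → ℤ | _}, Vwt χ)).trans ?_ <;>
    simp only [Int.cast_mul, Int.cast_natCast, ← mul_add, mul_right_inj' he'.ne',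
      mul_le_mul_iff_right₀ he']

/-- Let `E = k((u))` with `u^e = z` be a degree-`e` extension of
`F = k((z))`, so `τ_E = u·d/du` restricts to `e·τ` on `F`.  Let `V` be a
representation of `G` with weight decomposition `Vwt`, `x` in the standard apartment
over `F`, and `ex` the point with `(ex)~ = e·x̃` over `E`.  Then for all `r`, the
`F`-graded piece `V̂ₓ(r)` equals `(V⊗E)_{ex}(er) ∩ (V⊗F)`, and the filtration step
`V̂_{x,r}` equals `(V⊗E)_{ex,er} ∩ (V⊗F)`. -/
theorem stmt15 {d : ℕ}
    (Vwt : (Fin d → ℤ) → Submodule k V) (hinternal : DirectSum.IsInternal Vwt)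
    (x : Fin d → ℝ) (e : ℕ) (he : 0 < e) (r : ℝ) :
    -- graded pieces
    (Set.range (stretch (V := V) e he)
        ∩ {gE : HahnSeries ℤ V | ∀ n : ℤ,
            gE.coeff n ∈ ⨆ χ ∈ {χ : Fin d → ℤ |
              (e : ℝ) * (∑ i, (χ i : ℝ) * x i) + n = (e : ℝ) * r}, Vwt χ}
      = stretch (V := V) e he ''
          {f : HahnSeries ℤ V | ∀ m : ℤ,
            f.coeff m ∈ ⨆ χ ∈ {χ : Fin d → ℤ |
              (∑ i, (χ i : ℝ) * x i) + m = r}, Vwt χ})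
    ∧
    -- filtration steps
    (Set.range (stretch (V := V) e he)
        ∩ {gE : HahnSeries ℤ V | ∀ n : ℤ,
            gE.coeff n ∈ ⨆ χ ∈ {χ : Fin d → ℤ |
              (e : ℝ) * r ≤ (e : ℝ) * (∑ i, (χ i : ℝ) * x i) + n}, Vwt χ}
      = stretch (V := V) e he ''
          {f : HahnSeries ℤ V | ∀ m : ℤ,
            f.coeff m ∈ ⨆ χ ∈ {χ : Fin d → ℤ |
              r ≤ (∑ i, (χ i : ℝ) * x i) + m}, Vwt χ}) :=
  stmt15_general Vwt x e he r
end

section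
/- Let F = k((z)), and let x, y be two points of the standard apartment A_0 of GL_n (or any reductive G), identified with elements x̃, ỹ ∈ t_ℝ. Set δ_{x,y} = (x̃ − ỹ) dz/z ∈ ĝ^∨ (via the residue-trace pairing). Then for every g in the intersection of parahoric subgroups Ĝ_x ∩ Ĝ_y, one has Ad*(g)(δ_{x,y}) ∈ δ_{x,y} + ĝ^∨_{x,0+} + ĝ^∨_{y,0+}. (Proof idea: δ_{x,y} = ∂_y − ∂_x where ∂_x = d + x̃ dz/z is the canonical flat structure with (∂_x − i dz/z)V̂_x(i) = 0, and g∂_x g^{-1} ∈ ∂_x + ĝ^∨_{x,0+}, similarly for y.) -/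
open HahnSeries Matrix

variable {k : Type*} [Field k] [Algebra ℝ k]

/-- The Moy–Prasad filtration step `gl(Fⁿ)_{x,r}` for a point `x` of the standard
apartment of `GL_n` (identified with `x̃ ∈ t_ℝ ≅ ℝⁿ`): the `(i,j)`-entry `E_{ij} z^m`
has `τ + ad(x̃)`-eigenvalue `m + xᵢ − xⱼ`, so coefficients with `m + xᵢ − xⱼ < r`
must vanish. -/
def glFilt (n : ℕ) (x : Fin n → ℝ) (r : ℝ) :
    Set (Matrix (Fin n) (Fin n) (LaurentSeries k)) :=
  {M | ∀ (i j : Fin n) (m : ℤ), (m : ℝ) + x i - x j < r → (M i j).coeff m = 0}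

/-- The step `ĝ^∨_{x,0+}` of the dual filtration, identified via the residue-trace
pairing with the matrices whose `(i,j)`-entry coefficients vanish whenever
`m + xᵢ − xⱼ ≤ 0`. -/
def glFiltPlus (n : ℕ) (x : Fin n → ℝ) :
    Set (Matrix (Fin n) (Fin n) (LaurentSeries k)) :=
  {M | ∀ (i j : Fin n) (m : ℤ), (m : ℝ) + x i - x j ≤ 0 → (M i j).coeff m = 0}

/- The weight of the coefficient of `z^m` in entry `(i, j)` at the point `x` is
`m + xᵢ − xⱼ`; weights add under matrix multiplication. If `g, g⁻¹` have nonnegative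
weights at both `x` and `y`, then every term `g_{il} z^p · (g⁻¹)_{lj} z^q` contributing to a
coefficient of nonpositive weight at `x` and at `y` has weight zero at both points, so
`xₗ − yₗ = xᵢ − yᵢ`. Conjugating the diagonal matrix `δ = diag(x − y)` therefore acts on
such a coefficient as multiplication by `xᵢ − yᵢ` on `g g⁻¹ = 1`, and `g δ g⁻¹ − δ` has no
coefficient of nonpositive weight at both points. Truncating each entry at weight `0` for `x`
splits it into a part in `ĝ^∨_{x,0+}` and a part in `ĝ^∨_{y,0+}`. -/

section DiagonalConjugation

variable {ι Γ R : Type*} [DecidableEq ι] [AddCommMonoid Γ] [PartialOrder Γ]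

lemma coeff_diagonal_single_zero_apply [Semiring R] (c : ι → R) (i j : ι) (m : Γ) :
    ((diagonal fun l => single (0 : Γ) (c l)) i j).coeff m =
      c i * ((1 : Matrix ι ι (HahnSeries Γ R)) i j).coeff m := by
  rcases eq_or_ne i j with rfl | hij
  · rw [diagonal_apply_eq, one_apply_eq, coeff_single, coeff_one]
    split_ifs <;> simp
  · simp [diagonal_apply_ne _ hij, one_apply_ne hij]

lemma coeff_mul_diagonal_single_zero_mul_apply [Fintype ι] [IsOrderedCancelAddMonoid Γ]
    [CommSemiring R] (g h : Matrix ι ι (HahnSeries Γ R))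
    (c : ι → R) (i j : ι) (m : Γ) :
    ((g * diagonal (fun l => single (0 : Γ) (c l)) * h) i j).coeff m =
      ∑ l, c l * (g i l * h l j).coeff m := by
  rw [Matrix.mul_assoc, mul_apply, ← coeff.addMonoidHom_apply, map_sum]
  refine Finset.sum_congr rfl fun l _ => ?_
  rw [diagonal_mul, mul_left_comm, coeff.addMonoidHom_apply, coeff_single_zero_mul]

lemma coeff_mul_diagonal_single_zero_mul_sub_eq_zero [Fintype ι] [IsOrderedCancelAddMonoid Γ]
    [CommRing R] {g h : Matrix ι ι (HahnSeries Γ R)}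
    (hgh : g * h = 1) {c : ι → R} {i j : ι} {m : Γ}
    (hc : ∀ l, (g i l * h l j).coeff m ≠ 0 → c l = c i) :
    ((g * diagonal (fun l => single (0 : Γ) (c l)) * h -
        diagonal (fun l => single (0 : Γ) (c l))) i j).coeff m = 0 := by
  have hconst : ∀ l, c l * (g i l * h l j).coeff m = c i * (g i l * h l j).coeff m := by
    intro l
    by_cases hl : (g i l * h l j).coeff m = 0
    · simp [hl]
    · rw [hc l hl]
  rw [Matrix.sub_apply, coeff_sub, coeff_mul_diagonal_single_zero_mul_apply,
    coeff_diagonal_single_zero_apply, Finset.sum_congr rfl fun l _ => hconst l,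
    ← Finset.mul_sum, ← hgh, mul_apply, ← coeff.addMonoidHom_apply, map_sum]
  simp only [coeff.addMonoidHom_apply, sub_self]

end DiagonalConjugation

section Filtration

variable {K : Type*} [Field K] {n : ℕ} {x y : Fin n → ℝ}

lemma le_of_mem_glFilt_of_coeff_ne_zero {r : ℝ} {M : Matrix (Fin n) (Fin n) (LaurentSeries K)}
    (hM : M ∈ glFilt n x r) {i j : Fin n} {m : ℤ} (hm : (M i j).coeff m ≠ 0) :
    r ≤ m + x i - x j :=
  not_lt.mp fun h => hm (hM i j m h)

lemma sub_eq_sub_of_coeff_mul_ne_zero {g h : Matrix (Fin n) (Fin n) (LaurentSeries K)}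
    (hgx : g ∈ glFilt n x 0) (hhx : h ∈ glFilt n x 0)
    (hgy : g ∈ glFilt n y 0) (hhy : h ∈ glFilt n y 0) {i j l : Fin n} {m : ℤ}
    (hx : (m : ℝ) + x i - x j ≤ 0) (hy : (m : ℝ) + y i - y j ≤ 0)
    (hne : (g i l * h l j).coeff m ≠ 0) :
    x l - y l = x i - y i := by
  obtain ⟨p, hp, q, hq, rfl⟩ := Set.mem_add.mp (support_mul_subset hne)
  have := le_of_mem_glFilt_of_coeff_ne_zero hgx hp
  have := le_of_mem_glFilt_of_coeff_ne_zero hhx hq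
  have := le_of_mem_glFilt_of_coeff_ne_zero hgy hp
  have := le_of_mem_glFilt_of_coeff_ne_zero hhy hq
  push_cast at hx hy
  linarith

lemma exists_mem_glFiltPlus_add_eq {C : Matrix (Fin n) (Fin n) (LaurentSeries K)}
    (hC : ∀ i j (m : ℤ), (m : ℝ) + x i - x j ≤ 0 → (m : ℝ) + y i - y j ≤ 0 →
      (C i j).coeff m = 0) :
    ∃ A ∈ glFiltPlus (k := K) n x, ∃ B ∈ glFiltPlus (k := K) n y, C = A + B := by
  have weight_le_iff (i j : Fin n) (m : ℤ) :
      m < ⌊x j - x i⌋ + 1 ↔ (m : ℝ) + x i - x j ≤ 0 := by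
    rw [Int.lt_add_one_iff, Int.le_floor]
    constructor <;> intro <;> linarith
  let B : Matrix (Fin n) (Fin n) (LaurentSeries K) :=
    fun i j => truncLT (⌊x j - x i⌋ + 1) (C i j)
  refine ⟨C - B, ?_, B, ?_, (sub_add_cancel C B).symm⟩
  · intro i j m hm
    rw [Matrix.sub_apply, coeff_sub, HahnSeries.coeff_truncLT,
      if_pos ((weight_le_iff i j m).mpr hm), sub_self]
  · intro i j m hm
    show (truncLT _ (C i j)).coeff m = 0
    rw [HahnSeries.coeff_truncLT]
    split_ifs with hlt
    · exact hC i j m ((weight_le_iff i j m).mp hlt) hm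
    · rfl

end Filtration

/-- Let `x, y` be two points of the standard apartment `A₀` of `GL_n`
over `F = k((z))`, identified with `x̃, ỹ ∈ t_ℝ`, and set
`δ_{x,y} = (x̃ − ỹ) dz/z ∈ ĝ^∨` (via the residue-trace pairing, a constant diagonal
matrix).  Then for every `g` in the intersection of parahoric subgroups
`Ĝₓ ∩ Ĝ_y` (i.e. `g, g⁻¹ ∈ gl_{x,0} ∩ gl_{y,0}`) one has
`Ad*(g)(δ_{x,y}) ∈ δ_{x,y} + ĝ^∨_{x,0+} + ĝ^∨_{y,0+}`. -/
theorem stmt19 (n : ℕ) (x y : Fin n → ℝ)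
    (g : GL (Fin n) (LaurentSeries k))
    (hgx : (g : Matrix (Fin n) (Fin n) (LaurentSeries k)) ∈ glFilt (k := k) n x 0)
    (hgx' : ((g⁻¹ : GL (Fin n) (LaurentSeries k)) :
      Matrix (Fin n) (Fin n) (LaurentSeries k)) ∈ glFilt (k := k) n x 0)
    (hgy : (g : Matrix (Fin n) (Fin n) (LaurentSeries k)) ∈ glFilt (k := k) n y 0)
    (hgy' : ((g⁻¹ : GL (Fin n) (LaurentSeries k)) :
      Matrix (Fin n) (Fin n) (LaurentSeries k)) ∈ glFilt (k := k) n y 0) :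
    ∀ δ : Matrix (Fin n) (Fin n) (LaurentSeries k),
      δ = Matrix.diagonal (fun i => single (0 : ℤ) (algebraMap ℝ k (x i - y i))) →
      ∃ A ∈ glFiltPlus (k := k) n x, ∃ B ∈ glFiltPlus (k := k) n y,
        (g : Matrix (Fin n) (Fin n) (LaurentSeries k)) * δ *
            ((g⁻¹ : GL (Fin n) (LaurentSeries k)) :
              Matrix (Fin n) (Fin n) (LaurentSeries k)) - δ
          = A + B := by
  rintro δ rfl
  apply exists_mem_glFiltPlus_add_eq
  intro i j m hx hy
  refine coeff_mul_diagonal_single_zero_mul_sub_eq_zero g.mul_inv fun l hl => ?_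
  rw [sub_eq_sub_of_coeff_mul_ne_zero hgx hgx' hgy hgy' hx hy hl]
end
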